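/- arXiv:1911.12081 — 5 statements merged into one kernel-verified Lean document; each statement's English description precedes it below -/
import Mathlib

section
/- Let ‖·‖ be any norm on ℂⁿ making it a complex normed space and let L > 0. Then the function f : ℂⁿ → ℂⁿ defined by f(x) = iL·x is Lipschitz with constant L with respect to ‖·‖, and for any c ∈ ℂⁿ with c ≠ 0 the function x(t) = exp(iLt)·c is a nonconstant solution of x'(t) = f(x(t)) that is periodic with period 2π/L. Hence the bound TL = 2π is attained in every complex normed space ℂⁿ. -/
open Complex

theorem apply_smul_sub_smul_eq_norm_mul {M : Type*} [AddCommGroup M] [Module ℂ M] {N : M → ℝ}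
    (N_smul : ∀ (c : ℂ) (v : M), N (c • v) = ‖c‖ * N v) (a : ℂ) (v w : M) :
    N (a • v - a • w) = ‖a‖ * N (v - w) := by
  rw [← smul_sub, N_smul]

theorem norm_I_mul_ofReal_of_nonneg {L : ℝ} (hL : 0 ≤ L) : ‖I * L‖ = L := by
  simp [abs_of_nonneg hL]

section

variable {E : Type*} [NormedAddCommGroup E] [NormedSpace ℂ E]

theorem hasDerivAt_cexp_mul_ofReal_smul (a : ℂ) (c : E) (t : ℝ) :
    HasDerivAt (fun s : ℝ => exp (a * s) • c) (a • exp (a * t) • c) t := by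
  have h := (((hasDerivAt_id (t : ℂ)).const_mul a).cexp).comp_ofReal.smul_const c
  simpa only [id, mul_one, mul_comm _ a, smul_smul] using h

end

theorem cexp_I_mul_ofReal_add_two_pi_div {L : ℝ} (hL : L ≠ 0) (t : ℝ) :
    exp (I * L * (t + 2 * Real.pi / L)) = exp (I * L * t) := by
  have hL' : (L : ℂ) ≠ 0 := ofReal_ne_zero.mpr hL
  rw [show I * L * (t + 2 * Real.pi / L) = I * L * t + 2 * Real.pi * I by field_simp,
    exp_periodic]

theorem cexp_I_mul_ofReal_pi_div {L : ℝ} (hL : L ≠ 0) :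
    exp (I * L * (Real.pi / L)) = -1 := by
  have hL' : (L : ℂ) ≠ 0 := ofReal_ne_zero.mpr hL
  rw [show I * L * (Real.pi / L) = Real.pi * I by field_simp,
    exp_pi_mul_I]

theorem exists_cexp_I_mul_ofReal_smul_ne {M : Type*} [AddCommGroup M] [Module ℂ M]
    [IsAddTorsionFree M] {L : ℝ} (hL : L ≠ 0) {c : M} (hc : c ≠ 0) :
    ∃ t₁ t₂ : ℝ, exp (I * L * t₁) • c ≠ exp (I * L * t₂) • c :=
  ⟨0, Real.pi / L, by simpa [cexp_I_mul_ofReal_pi_div hL] using self_ne_neg.mpr hc⟩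

theorem minimal_period_complex_sharp_general
    (n : ℕ) (N : (Fin n → ℂ) → ℝ)
    (N_smul : ∀ (c : ℂ) (v : Fin n → ℂ), N (c • v) = ‖c‖ * N v)
    (L : ℝ) (hL : 0 < L)
    (f : (Fin n → ℂ) → (Fin n → ℂ)) (hfdef : ∀ v, f v = (Complex.I * L) • v) :
    (∀ a b : Fin n → ℂ, N (f a - f b) ≤ L * N (a - b)) ∧
    ∀ c : Fin n → ℂ, c ≠ 0 →
      (∀ t : ℝ,
        HasDerivAt (fun s : ℝ => Complex.exp (Complex.I * L * s) • c)
          (f (Complex.exp (Complex.I * L * t) • c)) t) ∧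
      (∀ t : ℝ,
        Complex.exp (Complex.I * L * (t + 2 * Real.pi / L)) • c
          = Complex.exp (Complex.I * L * t) • c) ∧
      (∃ t₁ t₂ : ℝ,
        Complex.exp (Complex.I * L * t₁) • c ≠ Complex.exp (Complex.I * L * t₂) • c) := by
  refine ⟨fun a b => ?_, fun c hc => ⟨fun t => ?_, fun t => ?_,
    exists_cexp_I_mul_ofReal_smul_ne hL.ne' hc⟩⟩
  · rw [hfdef, hfdef, apply_smul_sub_smul_eq_norm_mul N_smul, norm_I_mul_ofReal_of_nonneg hL.le]
  · rw [hfdef]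
    exact hasDerivAt_cexp_mul_ofReal_smul _ c t
  · rw [cexp_I_mul_ofReal_add_two_pi_div hL.ne']

/-- **Sharpness of Theorem 1, Zevin.** In any complex normed space `(ℂⁿ, N)`, the map
`f(x) = iL·x` is Lipschitz with constant `L`, and for every `c ≠ 0` the function
`x(t) = exp(iLt)·c` is a nonconstant solution of `ẋ = f(x)` of period `2π/L`;
hence the bound `T·L = 2π` is attained. -/
theorem minimal_period_complex_sharp
    (n : ℕ) (N : (Fin n → ℂ) → ℝ)
    (N_add : ∀ v w : Fin n → ℂ, N (v + w) ≤ N v + N w)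
    (N_smul : ∀ (c : ℂ) (v : Fin n → ℂ), N (c • v) = ‖c‖ * N v)
    (N_eq_zero : ∀ v : Fin n → ℂ, N v = 0 ↔ v = 0)
    (L : ℝ) (hL : 0 < L)
    (f : (Fin n → ℂ) → (Fin n → ℂ)) (hfdef : ∀ v, f v = (Complex.I * L) • v) :
    (∀ a b : Fin n → ℂ, N (f a - f b) ≤ L * N (a - b)) ∧
    ∀ c : Fin n → ℂ, c ≠ 0 →
      (∀ t : ℝ,
        HasDerivAt (fun s : ℝ => Complex.exp (Complex.I * L * s) • c)
          (f (Complex.exp (Complex.I * L * t) • c)) t) ∧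
      (∀ t : ℝ,
        Complex.exp (Complex.I * L * (t + 2 * Real.pi / L)) • c
          = Complex.exp (Complex.I * L * t) • c) ∧
      (∃ t₁ t₂ : ℝ,
        Complex.exp (Complex.I * L * t₁) • c ≠ Complex.exp (Complex.I * L * t₂) • c) :=
  minimal_period_complex_sharp_general n N N_smul L hL f hfdef
end

section
/- Let z : ℝ → ℂ be continuously differentiable, periodic with period T > 0, not constant, with zero mean ∫₀ᵀ z(t) dt = 0, and suppose |z'(t)| ≤ L|z(t)| for all t ∈ ℝ, where L > 0. Then T · L ≥ 2π. -/
/-!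
Wirtinger's inequality: integrating by parts, the `n`-th Fourier coefficient of `ż` on `[0, T]`
is `2πin/T` times that of `z`, and the zero mean kills the `n = 0` term, so Parseval gives
`∫|ż|² ≥ (2π/T)² ∫|z|²`. On the other hand `∫|ż|² ≤ L² ∫|z|²`, and `∫|z|² > 0` since `z ≢ 0`,
whence `2π/T ≤ L`.
-/

open MeasureTheory Real Set Complex
open scoped Interval

theorem ContinuousOn.memLp_restrict_Ioc {E : Type*} [NormedAddCommGroup E] {f : ℝ → E}
    {a b : ℝ} (hf : ContinuousOn f (Icc a b)) (p : ENNReal) :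
    MemLp f p (volume.restrict (Ioc a b)) := by
  obtain ⟨C, hC⟩ := isCompact_Icc.exists_bound_of_continuousOn hf
  exact MemLp.of_bound ((hf.mono Ioc_subset_Icc_self).aestronglyMeasurable measurableSet_Ioc) C
    ((ae_restrict_iff' measurableSet_Ioc).2 (ae_of_all _ fun x hx ↦ hC x (Ioc_subset_Icc_self hx)))

section FourierCoeffOn

variable {a b : ℝ} {f f' : ℝ → ℂ}

theorem fourierCoeffOn_deriv (hab : a < b) (hf : ∀ x ∈ [[a, b]], HasDerivAt f (f' x) x)
    (hf' : IntervalIntegrable f' volume a b) (hfab : f a = f b) {n : ℤ} (hn : n ≠ 0) :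
    fourierCoeffOn hab f' n = 2 * π * I * n / (b - a) * fourierCoeffOn hab f n := by
  have hba : ((b - a : ℝ) : ℂ) ≠ 0 := ofReal_ne_zero.2 (sub_pos.2 hab).ne'
  have h2πn : (2 * π * I * n : ℂ) ≠ 0 := by simp [pi_ne_zero, I_ne_zero, hn]
  rw [fourierCoeffOn_of_hasDerivAt hab hn hf hf', hfab, sub_self, mul_zero, zero_sub]
  push_cast at hba ⊢
  field_simp

theorem two_pi_div_mul_norm_fourierCoeffOn_le (hab : a < b)
    (hf : ∀ x ∈ [[a, b]], HasDerivAt f (f' x) x) (hf' : IntervalIntegrable f' volume a b)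
    (hfab : f a = f b) {n : ℤ} (hn : n ≠ 0) :
    2 * π / (b - a) * ‖fourierCoeffOn hab f n‖ ≤ ‖fourierCoeffOn hab f' n‖ := by
  have hn1 : (1 : ℝ) ≤ |(n : ℝ)| := by exact_mod_cast Int.one_le_abs hn
  rw [fourierCoeffOn_deriv hab hf hf' hfab hn, norm_mul]
  gcongr
  simp only [norm_div, norm_mul, Complex.norm_ofNat, norm_real, norm_I, norm_intCast, ← ofReal_sub,
    Real.norm_of_nonneg pi_pos.le, Real.norm_of_nonneg (sub_pos.2 hab).le, mul_one]
  rw [div_le_div_iff_of_pos_right (sub_pos.2 hab)]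
  exact le_mul_of_one_le_right (by positivity) hn1

theorem fourierCoeffOn_zero_eq_zero (hab : a < b) (hmean : ∫ x in a..b, f x = 0) :
    fourierCoeffOn hab f 0 = 0 := by
  simp [fourierCoeffOn_eq_integral, hmean]

theorem wirtinger_inequality (hab : a < b) (hf : ∀ x ∈ [[a, b]], HasDerivAt f (f' x) x)
    (hf' : MemLp f' 2 (volume.restrict (Ioc a b))) (hfab : f a = f b)
    (hmean : ∫ x in a..b, f x = 0) :
    (2 * π / (b - a)) ^ 2 * ∫ x in a..b, ‖f x‖ ^ 2 ≤ ∫ x in a..b, ‖f' x‖ ^ 2 := by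
  have hf'i : IntervalIntegrable f' volume a b :=
    (intervalIntegrable_iff_integrableOn_Ioc_of_le hab.le).2 (hf'.integrable one_le_two)
  have hfc : ContinuousOn f (Icc a b) := fun x hx ↦
    (hf x (Icc_subset_uIcc hx)).continuousAt.continuousWithinAt
  have hcoeff (n : ℤ) : (2 * π / (b - a)) ^ 2 * ‖fourierCoeffOn hab f n‖ ^ 2 ≤
      ‖fourierCoeffOn hab f' n‖ ^ 2 := by
    rcases eq_or_ne n 0 with rfl | hn
    · simp [fourierCoeffOn_zero_eq_zero hab hmean]
    · rw [← mul_pow]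
      exact pow_le_pow_left₀ (by positivity)
        (two_pi_div_mul_norm_fourierCoeffOn_le hab hf hf'i hfab hn) 2
  have h := hasSum_le hcoeff ((hasSum_sq_fourierCoeffOn hab (hfc.memLp_restrict_Ioc 2)).mul_left _)
    (hasSum_sq_fourierCoeffOn hab hf')
  rw [smul_eq_mul, smul_eq_mul, mul_left_comm] at h
  exact le_of_mul_le_mul_left h (inv_pos.2 (sub_pos.2 hab))

end FourierCoeffOn

theorem Function.Periodic.intervalIntegral_sq_norm_pos {E : Type*} [NormedAddCommGroup E]
    {f : ℝ → E} {T : ℝ} (hper : Function.Periodic f T) (hT : 0 < T) (hf : Continuous f) {t : ℝ}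
    (ht : f t ≠ 0) : 0 < ∫ x in (0:ℝ)..T, ‖f x‖ ^ 2 := by
  obtain ⟨s, hs, hfs⟩ := hper.exists_mem_Ico₀ hT t
  exact intervalIntegral.integral_pos hT (hf.norm.pow 2).continuousOn (fun _ _ ↦ by positivity)
    ⟨s, Ico_subset_Icc_self hs, by rw [← hfs]; positivity⟩

/-- **Analytical core of Theorem 1 (inequality (2.2)), Zevin.** If `z : ℝ → ℂ` is `C¹`,
nonconstant, `T`-periodic with zero mean on `[0, T]`, and satisfies `|ż(t)| ≤ L|z(t)|`
with `L > 0`, then `T·L ≥ 2π`. -/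
theorem period_bound_of_deriv_le
    (z : ℝ → ℂ) (hz : ContDiff ℝ 1 z)
    (T : ℝ) (hT : 0 < T)
    (hper : ∀ t : ℝ, z (t + T) = z t)
    (hnc : ∃ t₁ t₂ : ℝ, z t₁ ≠ z t₂)
    (hmean : ∫ t in (0:ℝ)..T, z t = 0)
    (L : ℝ) (hL : 0 < L)
    (hineq : ∀ t : ℝ, ‖deriv z t‖ ≤ L * ‖z t‖) :
    2 * Real.pi ≤ T * L := by
  have hz' : Continuous (deriv z) := hz.continuous_deriv le_rfl
  have hwirtinger := wirtinger_inequality hT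
    (fun x _ ↦ (hz.differentiable one_ne_zero x).hasDerivAt)
    (hz'.continuousOn.memLp_restrict_Ioc 2) (by simpa using (hper 0).symm) hmean
  rw [sub_zero] at hwirtinger
  have hbound : ∫ t in (0:ℝ)..T, ‖deriv z t‖ ^ 2 ≤ L ^ 2 * ∫ t in (0:ℝ)..T, ‖z t‖ ^ 2 := by
    rw [← intervalIntegral.integral_const_mul]
    refine intervalIntegral.integral_mono_on hT.le ((hz'.norm.pow 2).intervalIntegrable _ _)
      ((continuous_const.mul (hz.continuous.norm.pow 2)).intervalIntegrable _ _) fun t _ ↦ ?_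
    rw [← mul_pow]
    exact pow_le_pow_left₀ (norm_nonneg _) (hineq t) 2
  obtain ⟨t₁, t₂, hne⟩ := hnc
  obtain ⟨t, ht⟩ : ∃ t, z t ≠ 0 := by
    by_contra! h
    exact hne (by rw [h, h])
  have hpos := Function.Periodic.intervalIntegral_sq_norm_pos hper hT hz.continuous ht
  have hsq : (2 * π / T) ^ 2 ≤ L ^ 2 := le_of_mul_le_mul_right (hwirtinger.trans hbound) hpos
  rw [pow_le_pow_iff_left₀ (by positivity) hL.le two_ne_zero, div_le_iff₀ hT] at hsq
  rwa [mul_comm L T] at hsq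
end

section
/- Let A be a nonzero n × n complex matrix that is normal, i.e. AᴴA = AAᴴ, acting on the Euclidean space ℂⁿ (with the ℓ² norm), and let L = ‖A‖ be its operator norm. Then there exists c ∈ ℂ with |c| = 1 such that the equation x'(t) = cA x(t) has a nonconstant periodic solution of period 2π/L, and the map x ↦ cA x is Lipschitz with constant L; hence the normalized period T·L = 2π is attained. -/
/-!
A normal operator has spectral radius equal to its norm, so `A` has an eigenvalue `z` with
`|z| = ‖A‖ = L`. For `c = iL / z` the eigenvector `v` of `A` satisfies `cAv = iLv`, hence
`x(t) = e^{iLt} v` solves `ẋ = cAx`; it changes sign after time `π/L`, so it is nonconstant with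
period `2π/L`. Since `|c| = 1`, the Lipschitz constant of `cA` is `‖A‖ = L`.
-/

open Complex

theorem IsStarNormal.exists_hasEigenvalue_norm_eq_opNorm {E : Type*} [NormedAddCommGroup E]
    [InnerProductSpace ℂ E] [FiniteDimensional ℂ E] [Nontrivial E] (T : E →L[ℂ] E)
    [IsStarNormal T] : ∃ z : ℂ, ‖z‖ = ‖T‖ ∧ Module.End.HasEigenvalue (T : Module.End ℂ E) z := by
  obtain ⟨z, hz, hz_norm⟩ := spectrum.exists_nnnorm_eq_spectralRadius T
  rw [IsStarNormal.spectralRadius_eq_nnnorm, ENNReal.coe_inj] at hz_norm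
  refine ⟨z, congrArg NNReal.toReal hz_norm, ?_⟩
  rw [Module.End.hasEigenvalue_iff_mem_spectrum, ← ContinuousLinearMap.spectrum_eq]
  exact hz

section Rotation

variable {E : Type*} [NormedAddCommGroup E] [NormedSpace ℂ E]

theorem hasDerivAt_exp_mul_I_smul {f : E →ₗ[ℂ] E} {ω : ℝ} {v : E} (hv : f v = (ω * I) • v)
    (t : ℝ) :
    HasDerivAt (fun s : ℝ ↦ exp (ω * s * I) • v) (f (exp (ω * t * I) • v)) t := by
  have h_exp : HasDerivAt (fun s : ℝ ↦ exp (ω * s * I)) (exp (ω * t * I) * (ω * I)) t := by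
    simpa [mul_comm, mul_left_comm] using
      ((ofRealCLM.hasDerivAt (x := t)).const_mul (ω * I : ℂ)).cexp
  rw [map_smul, hv, smul_smul]
  exact h_exp.smul_const v

theorem antiperiodic_exp_mul_I_smul {ω : ℝ} (hω : ω ≠ 0) (v : E) :
    Function.Antiperiodic (fun s : ℝ ↦ exp (ω * s * I) • v) (Real.pi / ω) := by
  intro s
  have h_arg : (ω : ℂ) * ↑(s + Real.pi / ω) * I = ω * s * I + Real.pi * I := by
    push_cast
    rw [mul_add, mul_div_cancel₀ _ (ofReal_ne_zero.mpr hω), add_mul]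
  simp only [h_arg, exp_add, exp_pi_mul_I, mul_neg_one, neg_smul]

end Rotation

/-- **Section 2 (normal matrices), Zevin.** For a nonzero normal matrix `A` on the
Euclidean space `ℂⁿ` with operator norm `L`, there is a unimodular `c ∈ ℂ` such that
`x ↦ cAx` is Lipschitz with constant `L` and `ẋ = cAx` has a nonconstant periodic
solution of period `2π/L`; hence `T·L = 2π` is attained. -/
theorem normal_matrix_attains_bound
    (n : ℕ) (A : Matrix (Fin n) (Fin n) ℂ) (hA : A ≠ 0)
    (hnormal : A.conjTranspose * A = A * A.conjTranspose)
    (L : ℝ) (hL : L = ‖Matrix.toEuclideanCLM (𝕜 := ℂ) A‖) :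
    ∃ c : ℂ, ‖c‖ = 1 ∧
      (∀ u w : EuclideanSpace ℂ (Fin n),
        ‖c • Matrix.toEuclideanCLM (𝕜 := ℂ) A u - c • Matrix.toEuclideanCLM (𝕜 := ℂ) A w‖
          ≤ L * ‖u - w‖) ∧
      ∃ x : ℝ → EuclideanSpace ℂ (Fin n),
        (∀ t : ℝ, HasDerivAt x (c • Matrix.toEuclideanCLM (𝕜 := ℂ) A (x t)) t) ∧
        (∀ t : ℝ, x (t + 2 * Real.pi / L) = x t) ∧
        ∃ t₁ t₂ : ℝ, x t₁ ≠ x t₂ := by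
  set T := Matrix.toEuclideanCLM (𝕜 := ℂ) A
  have hT : T ≠ 0 := (map_ne_zero_iff _ Matrix.toEuclideanCLM.injective).mpr hA
  obtain ⟨u₀, hu₀⟩ := T.exists_ne_zero hT
  have : Nontrivial (EuclideanSpace ℂ (Fin n)) := nontrivial_of_ne u₀ 0 (by rintro rfl; simp at hu₀)
  have : IsStarNormal A := ⟨hnormal⟩
  obtain ⟨z, hz_norm, hz⟩ := IsStarNormal.exists_hasEigenvalue_norm_eq_opNorm T
  obtain ⟨v, hv⟩ := hz.exists_hasEigenvector
  have hL_pos : 0 < L := hL ▸ norm_pos_iff.mpr hT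
  have hz0 : z ≠ 0 := norm_pos_iff.mp (by rwa [hz_norm, ← hL])
  set c : ℂ := L * I / z
  have hc : ‖c‖ = 1 := by
    rw [norm_div, norm_mul, norm_I, mul_one, norm_real, Real.norm_of_nonneg hL_pos.le, hz_norm,
      ← hL, div_self hL_pos.ne']
  have hcv : (c • (T : Module.End ℂ _)) v = (L * I) • v := by
    rw [LinearMap.smul_apply, hv.apply_eq_smul, smul_smul, div_mul_cancel₀ _ hz0]
  refine ⟨c, hc, fun u w ↦ ?_, _, hasDerivAt_exp_mul_I_smul hcv, fun t ↦ ?_, 0, Real.pi / L, ?_⟩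
  · rw [← smul_sub, ← map_sub, norm_smul, hc, one_mul, hL]
    exact T.le_opNorm _
  · have h_period := (antiperiodic_exp_mul_I_smul hL_pos.ne' v).periodic t
    rwa [two_nsmul, ← two_mul, ← mul_div_assoc] at h_period
  · have h_half_turn := antiperiodic_exp_mul_I_smul hL_pos.ne' v 0
    simp only [zero_add] at h_half_turn
    have : IsAddTorsionFree (EuclideanSpace ℂ (Fin n)) := .of_module_rat _
    rw [h_half_turn, ne_eq, self_eq_neg]
    simpa using hv.2
end

section
/- Let A be a nonzero n × n complex matrix that is anti-Hermitian, i.e. Aᴴ = −A, acting on the Euclidean space ℂⁿ (with the ℓ² norm), and let L = ‖A‖ be its operator norm. Then the equation x'(t) = A x(t) has a nonconstant periodic solution of period 2π/L, and the map x ↦ A x is Lipschitz with constant L; hence the normalized period T·L = 2π is attained. -/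
/-!
An anti-Hermitian operator is normal, so its spectral radius equals its norm; in finite dimension
the spectrum consists of eigenvalues, so there is an eigenvector `v` whose eigenvalue `μ` has
`‖μ‖ = ‖A‖`, and `μ` is purely imaginary. Then `t ↦ exp (μ t) • v` solves `ẋ = A x`, has period
`2π / ‖μ‖`, and equals `-v` at half that period.
-/

open Complex ComplexConjugate Real

namespace ContinuousLinearMap

variable {E : Type*} [NormedAddCommGroup E] [InnerProductSpace ℂ E]

theorem exists_eigenvector_norm_eq_opNorm [FiniteDimensional ℂ E] [Nontrivial E]
    (T : E →L[ℂ] E) [IsStarNormal T] :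
    ∃ μ : ℂ, ∃ v : E, v ≠ 0 ∧ T v = μ • v ∧ ‖μ‖ = ‖T‖ := by
  obtain ⟨μ, hμT, hμ⟩ := spectrum.exists_nnnorm_eq_spectralRadius T
  rw [IsStarNormal.spectralRadius_eq_nnnorm, ENNReal.coe_inj] at hμ
  rw [spectrum_eq, ← Module.End.hasEigenvalue_iff_mem_spectrum] at hμT
  obtain ⟨v, hv⟩ := hμT.exists_hasEigenvector
  exact ⟨μ, v, hv.2, hv.apply_eq_smul, congrArg NNReal.toReal hμ⟩

theorem eigenvalue_re_eq_zero_of_star_eq_neg [CompleteSpace E] {T : E →L[ℂ] E} (hT : star T = -T)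
    {μ : ℂ} {v : E} (hv : v ≠ 0) (hTv : T v = μ • v) : μ.re = 0 := by
  have hconj : conj μ * inner ℂ v v = -μ * inner ℂ v v :=
    calc conj μ * inner ℂ v v = inner ℂ (T v) v := by rw [hTv, inner_smul_left]
      _ = inner ℂ v (star T v) := by rw [star_eq_adjoint, adjoint_inner_right]
      _ = -μ * inner ℂ v v := by rw [hT, neg_apply, inner_neg_right, hTv, inner_smul_right, neg_mul]
  have := congrArg re (mul_right_cancel₀ (inner_self_ne_zero.mpr hv) hconj)
  simp only [conj_re, neg_re] at this
  linarith

end ContinuousLinearMap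

namespace Complex

theorem exp_mul_pi_div_norm {μ : ℂ} (hre : μ.re = 0) (hμ : μ ≠ 0) :
    exp (μ * (π / ‖μ‖)) = -1 := by
  obtain ⟨y, rfl⟩ : ∃ y : ℝ, μ = y * I := ⟨μ.im, Complex.ext (by simp [hre]) (by simp)⟩
  have hy : (y : ℂ) ≠ 0 := by rintro h; simp [h] at hμ
  rw [norm_mul, norm_I, mul_one, norm_real, Real.norm_eq_abs]
  rcases abs_cases y with ⟨habs, _⟩ | ⟨habs, _⟩
  · rw [habs, show (y : ℂ) * I * (π / y) = π * I by field_simp, exp_pi_mul_I]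
  · rw [habs, show (y : ℂ) * I * (π / ↑(-y)) = -(π * I) by push_cast; field_simp,
      exp_neg, exp_pi_mul_I, inv_neg, inv_one]

theorem exp_mul_two_pi_div_norm {μ : ℂ} (hre : μ.re = 0) (hμ : μ ≠ 0) :
    exp (μ * (2 * π / ‖μ‖)) = 1 := by
  rw [mul_div_assoc, mul_left_comm, two_mul, exp_add, exp_mul_pi_div_norm hre hμ]
  norm_num

end Complex

section EigenvectorSolution

variable {F : Type*} [NormedAddCommGroup F] [NormedSpace ℂ F] {μ : ℂ} {v : F}

theorem hasDerivAt_exp_mul_smul_of_apply_eq_smul {T : F →L[ℂ] F} (hTv : T v = μ • v) (t : ℝ) :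
    HasDerivAt (fun s : ℝ => exp (μ * s) • v) (T (exp (μ * t) • v)) t := by
  have hexp : HasDerivAt (fun z : ℂ => exp (μ * z)) (exp (μ * t) * μ) t :=
    ((hasDerivAt_id (t : ℂ)).const_mul μ).cexp.congr_deriv (by simp)
  convert hexp.comp_ofReal.smul_const v using 1
  rw [T.map_smul, hTv, smul_smul]

theorem periodic_exp_mul_smul (hre : μ.re = 0) (hμ : μ ≠ 0) :
    Function.Periodic (fun s : ℝ => exp (μ * s) • v) (2 * π / ‖μ‖) := by
  intro t
  simp only [ofReal_add, ofReal_div, ofReal_mul, ofReal_ofNat, mul_add, Complex.exp_add,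
    exp_mul_two_pi_div_norm hre hμ, mul_one]

end EigenvectorSolution

/-- **Section 2 (anti-Hermitian matrices), Zevin.** For a nonzero anti-Hermitian matrix
`A` (i.e. `Aᴴ = −A`) on the Euclidean space `ℂⁿ` with operator norm `L`, the map
`x ↦ Ax` is Lipschitz with constant `L` and `ẋ = Ax` has a nonconstant periodic
solution of period `2π/L`; hence `T·L = 2π` is attained. -/
theorem antiHermitian_matrix_attains_bound
    (n : ℕ) (A : Matrix (Fin n) (Fin n) ℂ) (hA : A ≠ 0)
    (hskew : A.conjTranspose = -A)
    (L : ℝ) (hL : L = ‖Matrix.toEuclideanCLM (𝕜 := ℂ) A‖) :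
    (∀ u w : EuclideanSpace ℂ (Fin n),
      ‖Matrix.toEuclideanCLM (𝕜 := ℂ) A u - Matrix.toEuclideanCLM (𝕜 := ℂ) A w‖
        ≤ L * ‖u - w‖) ∧
    ∃ x : ℝ → EuclideanSpace ℂ (Fin n),
      (∀ t : ℝ, HasDerivAt x (Matrix.toEuclideanCLM (𝕜 := ℂ) A (x t)) t) ∧
      (∀ t : ℝ, x (t + 2 * Real.pi / L) = x t) ∧
      ∃ t₁ t₂ : ℝ, x t₁ ≠ x t₂ := by
  set T := Matrix.toEuclideanCLM (𝕜 := ℂ) A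
  subst hL
  refine ⟨fun u w => by rw [← map_sub]; exact T.le_opNorm _, ?_⟩
  have hT : star T = -T := by
    rw [← map_star, ← map_neg, Matrix.star_eq_conjTranspose, hskew]
  have hT0 : T ≠ 0 := (map_ne_zero_iff _ (Matrix.toEuclideanCLM (n := Fin n)).injective).mpr hA
  obtain ⟨u, hu⟩ : ∃ u, T u ≠ 0 := by simpa [DFunLike.ne_iff] using hT0
  have : Nontrivial (EuclideanSpace ℂ (Fin n)) := nontrivial_of_ne u 0 (by rintro rfl; simp at hu)
  have : IsStarNormal T := ⟨by rw [hT]; exact (Commute.refl T).neg_left⟩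
  obtain ⟨μ, v, hv, hTv, hμ⟩ := T.exists_eigenvector_norm_eq_opNorm
  have hre := ContinuousLinearMap.eigenvalue_re_eq_zero_of_star_eq_neg hT hv hTv
  have hμ0 : μ ≠ 0 := by rw [← norm_ne_zero_iff, hμ]; exact norm_ne_zero_iff.mpr hT0
  rw [← hμ]
  refine ⟨fun s => exp (μ * s) • v, hasDerivAt_exp_mul_smul_of_apply_eq_smul hTv,
    periodic_exp_mul_smul hre hμ0, 0, π / ‖μ‖, ?_⟩
  have := IsAddTorsionFree.of_isTorsionFree ℂ (EuclideanSpace ℂ (Fin n))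
  simpa [exp_mul_pi_div_norm hre hμ0] using self_eq_neg.not.mpr hv
end

section
/- Let A be a nonzero n × n real matrix that is skew-symmetric, i.e. Aᵀ = −A, acting on the Euclidean space ℝⁿ (with the ℓ² norm), and let L = ‖A‖ be its operator norm. Then the equation x'(t) = A x(t) has a nonconstant periodic solution x : ℝ → ℝⁿ of period 2π/L, and the map x ↦ A x is Lipschitz with constant L; hence the normalized period T·L = 2π is attained. -/
/-!
By compactness of the unit sphere, some unit vector `v` has `‖T v‖ = ‖T‖`. Expanding
`‖T† (T v) - ‖T‖² v‖²` and using `‖T† (T v)‖ ≤ ‖T‖²` and `⟪T† (T v), v⟫ = ‖T v‖² = ‖T‖²` shows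
that this square is `≤ 0`, so `T† (T v) = ‖T‖² v`. For skew `T` this reads `T (T v) = -‖T‖² v`:
the plane spanned by `v` and `T v` is invariant, and on it `ẋ = T x` is the rotation
`t ↦ cos (‖T‖ t) v + (sin (‖T‖ t) / ‖T‖) T v`, of period `2π / ‖T‖`, which reaches `-v` at
half period.
-/

open Metric Real

namespace ContinuousLinearMap

section NormAttained

variable {𝕜 E F : Type*} [RCLike 𝕜]

theorem exists_norm_eq_one_and_norm_apply_eq_opNorm [NormedAddCommGroup E] [NormedSpace 𝕜 E]
    [FiniteDimensional 𝕜 E] [Nontrivial E] [SeminormedAddCommGroup F] [NormedSpace 𝕜 F]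
    (T : E →L[𝕜] F) : ∃ x, ‖x‖ = 1 ∧ ‖T x‖ = ‖T‖ := by
  have := FiniteDimensional.proper_rclike 𝕜 E
  obtain ⟨x, hx, hmax⟩ := (isCompact_sphere (0 : E) 1).exists_isMaxOn
    (Set.nonempty_coe_sort.mp (NormedSpace.sphere_nonempty_rclike 𝕜 zero_le_one))
    (continuous_norm.comp T.continuous).continuousOn
  rw [mem_sphere_zero_iff_norm] at hx
  refine ⟨x, hx, le_antisymm (by simpa [hx] using T.le_opNorm x) ?_⟩
  refine T.opNorm_le_bound (norm_nonneg _) fun y => ?_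
  rcases eq_or_ne y 0 with rfl | hy
  · simp
  have hu : (‖y‖ : 𝕜)⁻¹ • y ∈ sphere (0 : E) 1 := by simp [norm_smul_inv_norm hy]
  have hy' : y = (‖y‖ : 𝕜) • ((‖y‖ : 𝕜)⁻¹ • y) := by
    rw [smul_inv_smul₀ (by simpa using hy)]
  calc ‖T y‖ = ‖y‖ * ‖T ((‖y‖ : 𝕜)⁻¹ • y)‖ := by
        conv_lhs => rw [hy', map_smul, norm_smul, RCLike.norm_ofReal, abs_norm]
    _ ≤ ‖y‖ * ‖T x‖ := by gcongr; exact hmax hu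
    _ = ‖T x‖ * ‖y‖ := mul_comm _ _

variable [NormedAddCommGroup E] [InnerProductSpace 𝕜 E] [CompleteSpace E]
  [NormedAddCommGroup F] [InnerProductSpace 𝕜 F] [CompleteSpace F]

theorem adjoint_apply_apply_eq_of_norm_apply_eq (T : E →L[𝕜] F) {x : E}
    (hx : ‖T x‖ = ‖T‖ * ‖x‖) : adjoint T (T x) = ((‖T‖ ^ 2 : ℝ) : 𝕜) • x := by
  have hnorm : ‖adjoint T (T x)‖ ≤ ‖T‖ ^ 2 * ‖x‖ := by
    calc ‖adjoint T (T x)‖ ≤ ‖T‖ * ‖T x‖ := by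
          simpa only [LinearIsometryEquiv.norm_map] using (adjoint T).le_opNorm (T x)
      _ = ‖T‖ ^ 2 * ‖x‖ := by rw [hx]; ring
  have hinner : RCLike.re (inner 𝕜 (adjoint T (T x)) x) = ‖T‖ ^ 2 * ‖x‖ ^ 2 := by
    rw [adjoint_inner_left, inner_self_eq_norm_sq (𝕜 := 𝕜), hx]; ring
  have hsq : ‖adjoint T (T x) - ((‖T‖ ^ 2 : ℝ) : 𝕜) • x‖ ^ 2 ≤ 0 := by
    rw [norm_sub_sq (𝕜 := 𝕜), inner_smul_right, RCLike.re_ofReal_mul, hinner, norm_smul,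
      RCLike.norm_ofReal, abs_of_nonneg (by positivity)]
    nlinarith [norm_nonneg (adjoint T (T x)), norm_nonneg x, norm_nonneg T]
  rw [← sub_eq_zero, ← norm_eq_zero]
  exact pow_eq_zero_iff two_ne_zero |>.mp (le_antisymm hsq (sq_nonneg _))

end NormAttained

theorem exists_norm_eq_one_and_apply_apply_eq_neg_of_adjoint_eq_neg {E : Type*}
    [NormedAddCommGroup E] [InnerProductSpace ℝ E] [FiniteDimensional ℝ E] [Nontrivial E]
    {T : E →L[ℝ] E} (hT : adjoint T = -T) :
    ∃ v, ‖v‖ = 1 ∧ T (T v) = -(‖T‖ ^ 2) • v := by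
  obtain ⟨v, hv, hTv⟩ := T.exists_norm_eq_one_and_norm_apply_eq_opNorm
  have := T.adjoint_apply_apply_eq_of_norm_apply_eq (x := v) (by rw [hv, hTv, mul_one])
  rw [hT, neg_apply, RCLike.ofReal_real_eq_id, id, neg_eq_iff_eq_neg, ← neg_smul] at this
  exact ⟨v, hv, this⟩

section HarmonicOrbit

variable {E : Type*} [NormedAddCommGroup E] [NormedSpace ℝ E] (T : E →L[ℝ] E) (ω : ℝ) (v : E)

noncomputable def harmonicOrbit (t : ℝ) : E := cos (ω * t) • v + (sin (ω * t) / ω) • T v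

theorem harmonicOrbit_zero : T.harmonicOrbit ω v 0 = v := by
  simp [harmonicOrbit]

variable {ω}

theorem harmonicOrbit_pi_div (hω : ω ≠ 0) : T.harmonicOrbit ω v (π / ω) = -v := by
  simp [harmonicOrbit, mul_div_cancel₀ π hω]

theorem periodic_harmonicOrbit (hω : ω ≠ 0) :
    Function.Periodic (T.harmonicOrbit ω v) (2 * π / ω) := fun t => by
  simp only [harmonicOrbit, mul_add, mul_div_cancel₀ (2 * π) hω, cos_add_two_pi, sin_add_two_pi]

variable {v} in
theorem hasDerivAt_harmonicOrbit (hω : ω ≠ 0) (hv : T (T v) = -(ω ^ 2) • v) (t : ℝ) :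
    HasDerivAt (T.harmonicOrbit ω v) (T (T.harmonicOrbit ω v t)) t := by
  have hωt : HasDerivAt (fun s => ω * s) ω t := by simpa using (hasDerivAt_id t).const_mul ω
  have hsum := (hωt.cos.smul_const v).add ((hωt.sin.div_const ω).smul_const (T v))
  refine hsum.congr_deriv ?_
  simp only [harmonicOrbit, map_add, map_smul, hv]
  match_scalars <;> field_simp

end HarmonicOrbit

end ContinuousLinearMap

theorem Matrix.adjoint_toEuclideanCLM_of_transpose_eq_neg {n : Type*} [Fintype n] [DecidableEq n]
    {A : Matrix n n ℝ} (hA : A.transpose = -A) :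
    ContinuousLinearMap.adjoint (toEuclideanCLM (𝕜 := ℝ) A) = -toEuclideanCLM (𝕜 := ℝ) A := by
  rw [← ContinuousLinearMap.star_eq_adjoint, ← map_star, star_eq_conjTranspose,
    conjTranspose_eq_transpose_of_trivial, hA, map_neg]

/-- **Section 2 (real skew-symmetric matrices), Zevin.** For a nonzero real
skew-symmetric matrix `A` (i.e. `Aᵀ = −A`) on the Euclidean space `ℝⁿ` with operator
norm `L`, the map `x ↦ Ax` is Lipschitz with constant `L` and `ẋ = Ax` has a
nonconstant periodic solution of period `2π/L`; hence `T·L = 2π` is attained. -/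
theorem skewSymmetric_matrix_attains_bound
    (n : ℕ) (A : Matrix (Fin n) (Fin n) ℝ) (hA : A ≠ 0)
    (hskew : A.transpose = -A)
    (L : ℝ) (hL : L = ‖Matrix.toEuclideanCLM (𝕜 := ℝ) A‖) :
    (∀ u w : EuclideanSpace ℝ (Fin n),
      ‖Matrix.toEuclideanCLM (𝕜 := ℝ) A u - Matrix.toEuclideanCLM (𝕜 := ℝ) A w‖
        ≤ L * ‖u - w‖) ∧
    ∃ x : ℝ → EuclideanSpace ℝ (Fin n),
      (∀ t : ℝ, HasDerivAt x (Matrix.toEuclideanCLM (𝕜 := ℝ) A (x t)) t) ∧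
      (∀ t : ℝ, x (t + 2 * Real.pi / L) = x t) ∧
      ∃ t₁ t₂ : ℝ, x t₁ ≠ x t₂ := by
  set T := Matrix.toEuclideanCLM (𝕜 := ℝ) A
  refine ⟨fun u w => by simpa only [← map_sub, hL] using T.le_opNorm (u - w), ?_⟩
  have hT : T ≠ 0 := (map_ne_zero_iff _ (Matrix.toEuclideanCLM (𝕜 := ℝ)).injective).mpr hA
  have hL0 : L ≠ 0 := hL ▸ norm_ne_zero_iff.mpr hT
  have : Nontrivial (EuclideanSpace ℝ (Fin n)) :=
    (subsingleton_or_nontrivial _).resolve_left fun _ => hT (Subsingleton.elim _ _)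
  obtain ⟨v, hv, hTTv⟩ :=
    ContinuousLinearMap.exists_norm_eq_one_and_apply_apply_eq_neg_of_adjoint_eq_neg
      (Matrix.adjoint_toEuclideanCLM_of_transpose_eq_neg hskew)
  rw [← hL] at hTTv
  refine ⟨T.harmonicOrbit L v, T.hasDerivAt_harmonicOrbit hL0 hTTv, T.periodic_harmonicOrbit v hL0,
    0, π / L, ?_⟩
  rw [T.harmonicOrbit_zero, T.harmonicOrbit_pi_div v hL0]
  have := IsAddTorsionFree.of_isTorsionFree ℝ (EuclideanSpace ℝ (Fin n))
  exact self_ne_neg.mpr (ne_zero_of_norm_ne_zero (hv ▸ one_ne_zero))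
end
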